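/- arXiv:math/9808076 — 9 statements merged into one kernel-verified Lean document; each statement's English description precedes it below -/
import Mathlib

section
/- Let l be a lace-map on the subsets of a finite set P and let L be a lace. Define C(L) = {p ∈ P \ L : l(L ∪ {p}) = L}. Then for every subset S of P, one has l(S) = L if and only if L ⊆ S ⊆ L ∪ C(L). -/
/-- The set `C(L)` of properties compatible with a lace `L`. -/
def laceC {α : Type*} [DecidableEq α] [Fintype α]
    (l : Finset α → Finset α) (L : Finset α) : Finset α :=
  (Finset.univ \ L).filter (fun p => l (insert p L) = L)

/-- For a lace-map `l` and a lace `L`, a subset `S` satisfies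
`l S = L` if and only if `L ⊆ S ⊆ L ∪ C(L)`. -/
theorem lace_fiber_eq_interval {α : Type*} [DecidableEq α] [Fintype α]
    (l : Finset α → Finset α)
    (h1 : ∀ S : Finset α, l S ⊆ S)
    (h2 : ∀ S G : Finset α, l S ⊆ G → G ⊆ S → l G = l S)
    (h3 : ∀ S₁ S₂ : Finset α, l S₁ = l S₂ → l (S₁ ∪ S₂) = l S₁)
    (L : Finset α) (hL : l L = L) (S : Finset α) :
    l S = L ↔ L ⊆ S ∧ S ⊆ L ∪ laceC l L := by
  constructor
  · intro hS
    have hLS : L ⊆ S := hS ▸ h1 S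
    refine ⟨hLS, fun p hp => ?_⟩
    by_cases hpL : p ∈ L
    · exact Finset.mem_union_left _ hpL
    · refine Finset.mem_union_right _ ?_
      simp only [laceC, Finset.mem_filter, Finset.mem_sdiff, Finset.mem_univ, true_and]
      refine ⟨hpL, ?_⟩
      have hsub : insert p L ⊆ S := Finset.insert_subset hp hLS
      have : l (insert p L) = l S :=
        h2 S (insert p L) (by rw [hS]; exact Finset.subset_insert _ _) hsub
      rw [this, hS]
  · rintro ⟨hLS, hSC⟩
    -- induction on card of S
    induction S using Finset.strongInduction with
    | _ S ih =>
      by_cases hSL : S = L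
      · rw [hSL, hL]
      · obtain ⟨p, hpS, hpL⟩ : ∃ p ∈ S, p ∉ L := by
          by_contra h
          push_neg at h
          exact hSL (Finset.Subset.antisymm h hLS)
        have hpC : p ∈ laceC l L := by
          rcases Finset.mem_union.mp (hSC hpS) with h | h
          · exact absurd h hpL
          · exact h
        have hlp : l (insert p L) = L := by
          exact (by simpa [laceC] using hpC : _ ∧ _).2
        set S' := S.erase p with hS'
        have hLS' : L ⊆ S' := fun q hq =>
          Finset.mem_erase.mpr ⟨fun e => hpL (e ▸ hq), hLS hq⟩
        have hS'C : S' ⊆ L ∪ laceC l L := fun q hq => hSC (Finset.erase_subset _ _ hq)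
        have hS'lt : S' ⊂ S := Finset.erase_ssubset hpS
        have hlS' : l S' = L := ih S' hS'lt hLS' hS'C
        have hunion : S' ∪ insert p L = S := by
          apply Finset.Subset.antisymm
          · intro q hq
            rcases Finset.mem_union.mp hq with h | h
            · exact Finset.erase_subset _ _ h
            · rcases Finset.mem_insert.mp h with h | h
              · exact h ▸ hpS
              · exact hLS h
          · intro q hq
            by_cases hqp : q = p
            · exact Finset.mem_union_right _ (Finset.mem_insert.mpr (Or.inl hqp))
            · exact Finset.mem_union_left _ (Finset.mem_erase.mpr ⟨hqp, hq⟩)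
        have := h3 S' (insert p L) (by rw [hlS', hlp])
        rw [hunion, hlS'] at this
        exact this
end

section
/- Let l be a lace-map on the subsets of a finite set P. Then for every subset S of P there is a unique lace L such that L ⊆ S ⊆ L ∪ C(L), namely L = l(S); equivalently, the Boolean intervals {S : L ⊆ S ⊆ L ∪ C(L)}, as L ranges over all laces of l, partition the power set of P. -/
section LaceMap

variable {α : Type*} {l : Finset α → Finset α}

theorem lace_map_idem (h1 : ∀ S, l S ⊆ S) (h2 : ∀ S G, l S ⊆ G → G ⊆ S → l G = l S)
    (S : Finset α) : l (l S) = l S :=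
  h2 S (l S) subset_rfl (h1 S)

variable [DecidableEq α] [Fintype α]

theorem mem_laceC {L : Finset α} {p : α} :
    p ∈ laceC l L ↔ p ∉ L ∧ l (insert p L) = L := by
  simp [laceC]

theorem subset_map_union_laceC (h1 : ∀ S, l S ⊆ S)
    (h2 : ∀ S G, l S ⊆ G → G ⊆ S → l G = l S) (S : Finset α) :
    S ⊆ l S ∪ laceC l (l S) := by
  intro p hp
  by_cases hpl : p ∈ l S
  · exact Finset.mem_union_left _ hpl
  · exact Finset.mem_union_right _ <| mem_laceC.2
      ⟨hpl, h2 S _ (Finset.subset_insert p _) (Finset.insert_subset hp (h1 S))⟩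

theorem map_union_of_subset_laceC (h3 : ∀ S₁ S₂, l S₁ = l S₂ → l (S₁ ∪ S₂) = l S₁)
    {L : Finset α} (hL : l L = L) {T : Finset α} (hT : T ⊆ laceC l L) : l (L ∪ T) = L := by
  induction T using Finset.induction_on with
  | empty => simpa using hL
  | @insert p T _ ih =>
    rw [Finset.insert_subset_iff] at hT
    have hT' : l (L ∪ T) = L := ih hT.2
    have hp : l (insert p L) = L := (mem_laceC.1 hT.1).2
    have hunion : L ∪ insert p T = (L ∪ T) ∪ insert p L := by
      ext x; simp only [Finset.mem_union, Finset.mem_insert]; tauto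
    rw [hunion, h3 _ _ (hT'.trans hp.symm), hT']

end LaceMap

/-- For every subset `S` there is a unique lace `L` with
`L ⊆ S ⊆ L ∪ C(L)`, namely `L = l S`; so the Boolean intervals
`[L, L ∪ C(L)]`, as `L` ranges over laces, partition the power set. -/
theorem lace_interval_partition {α : Type*} [DecidableEq α] [Fintype α]
    (l : Finset α → Finset α)
    (h1 : ∀ S : Finset α, l S ⊆ S)
    (h2 : ∀ S G : Finset α, l S ⊆ G → G ⊆ S → l G = l S)
    (h3 : ∀ S₁ S₂ : Finset α, l S₁ = l S₂ → l (S₁ ∪ S₂) = l S₁)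
    (S : Finset α) :
    (l (l S) = l S ∧ l S ⊆ S ∧ S ⊆ l S ∪ laceC l (l S)) ∧
      (∀ L : Finset α, l L = L → L ⊆ S → S ⊆ L ∪ laceC l L → L = l S) := by
  refine ⟨⟨lace_map_idem h1 h2 S, h1 S, subset_map_union_laceC h1 h2 S⟩, ?_⟩
  intro L hL hLS hSC
  have hcompat : S \ L ⊆ laceC l L := sdiff_le_iff.2 hSC
  have := map_union_of_subset_laceC h3 hL hcompat
  rwa [Finset.union_sdiff_of_subset hLS, eq_comm] at this
end

section
/- Let l be a lace-map on the subsets of a finite set P, let R be a commutative ring, and let Y : P → R be any assignment of ring elements to the elements of P. Then ∏_{p ∈ P} (1 + Y_p) = Σ_{L lace of l} (∏_{s ∈ L} Y_s) · (∏_{s ∈ C(L)} (1 + Y_s)), where the sum is over all laces L of l. -/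
/-- the polynomial identity (*) behind the lace expansion:
`∏_{p ∈ P} (1 + Y p) = Σ_{L lace} (∏_{s ∈ L} Y s) · (∏_{s ∈ C(L)} (1 + Y s))`. -/
theorem lace_polynomial_identity {α : Type*} [DecidableEq α] [Fintype α]
    (l : Finset α → Finset α)
    (h1 : ∀ S : Finset α, l S ⊆ S)
    (h2 : ∀ S G : Finset α, l S ⊆ G → G ⊆ S → l G = l S)
    (h3 : ∀ S₁ S₂ : Finset α, l S₁ = l S₂ → l (S₁ ∪ S₂) = l S₁)
    (R : Type*) [CommRing R] (Y : α → R) :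
    ∏ p : α, (1 + Y p) =
      ∑ L ∈ Finset.univ.filter (fun L : Finset α => l L = L),
        (∏ s ∈ L, Y s) * ∏ s ∈ laceC l L, (1 + Y s) := by
  classical
  -- key: if L is a lace and T ⊆ C(L) then l (L ∪ T) = L
  have key : ∀ (T L : Finset α), l L = L → T ⊆ laceC l L → l (L ∪ T) = L := by
    intro T
    induction T using Finset.induction_on with
    | empty => intro L hL _; simpa using hL
    | @insert p T hp ih =>
      intro L hL hT
      have hTsub : T ⊆ laceC l L := (Finset.insert_subset_iff.mp hT).2
      have hpC : p ∈ laceC l L := (Finset.insert_subset_iff.mp hT).1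
      have hpl : l (insert p L) = L := (Finset.mem_filter.mp hpC).2
      have h₁ : l (L ∪ T) = L := ih L hL hTsub
      have h₂ : l ((L ∪ T) ∪ insert p L) = l (L ∪ T) := by
        apply h3
        rw [h₁, hpl]
      have hset : (L ∪ T) ∪ insert p L = L ∪ insert p T := by
        ext x; simp [Finset.mem_insert, Finset.mem_union]; tauto
      rw [hset] at h₂
      rw [h₂, h₁]
  -- expand LHS over subsets
  have lhs : ∏ p : α, (1 + Y p) =
      ∑ S ∈ (Finset.univ : Finset α).powerset, ∏ s ∈ S, Y s := by
    have : ∀ p : α, (1 + Y p) = Y p + 1 := fun p => add_comm _ _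
    simp_rw [this, Finset.prod_add]
    simp
  -- expand each factor on RHS
  have rhs : ∀ L : Finset α,
      (∏ s ∈ L, Y s) * ∏ s ∈ laceC l L, (1 + Y s) =
      ∑ T ∈ (laceC l L).powerset, (∏ s ∈ L, Y s) * ∏ s ∈ T, Y s := by
    intro L
    have : ∀ p : α, (1 + Y p) = Y p + 1 := fun p => add_comm _ _
    simp_rw [this, Finset.prod_add]
    simp [Finset.mul_sum]
  rw [lhs]
  rw [Finset.sum_congr rfl (fun L _ => rhs L)]
  rw [Finset.sum_sigma']
  apply Finset.sum_nbij' (i := fun S => (⟨l S, S \ l S⟩ : Σ _ : Finset α, Finset α))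
    (j := fun p => p.1 ∪ p.2)
  · intro S hS
    simp only [Finset.mem_sigma, Finset.mem_filter, Finset.mem_univ, true_and,
      Finset.mem_powerset]
    constructor
    · exact h2 S (l S) le_rfl (h1 S)
    · intro p hp
      simp only [Finset.mem_sdiff] at hp
      simp only [laceC, Finset.mem_filter, Finset.mem_sdiff, Finset.mem_univ, true_and]
      refine ⟨hp.2, ?_⟩
      exact h2 S (insert p (l S)) (Finset.subset_insert _ _)
        (Finset.insert_subset hp.1 (h1 S))
  · intro p hp
    simp
  · intro S hS
    simp only
    exact Finset.union_sdiff_of_subset (h1 S)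
  · intro ⟨L, T⟩ hp
    simp only [Finset.mem_sigma, Finset.mem_filter, Finset.mem_univ, true_and,
      Finset.mem_powerset] at hp
    obtain ⟨hL, hT⟩ := hp
    have hl : l (L ∪ T) = L := key T L hL hT
    have hdisj : Disjoint L T := by
      intro s hsL hsT x hx
      have h1x := hsL hx; have h2x := hsT hx
      have := hT h2x
      simp only [laceC, Finset.mem_filter, Finset.mem_sdiff] at this
      exact absurd h1x this.1.2
    simp only [hl]
    have : (L ∪ T) \ L = T := by
      rw [Finset.union_sdiff_left]
      exact Finset.sdiff_eq_self_of_disjoint hdisj.symm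
    rw [this]
  · intro S hS
    simp only
    rw [← Finset.prod_sdiff (h1 S)]
    ring
end

section
/- (Abstract Lace Expansion) Let l be a lace-map on the subsets of a finite set P, let X be a finite set, let A : X → (subsets of P) assign to each element of X the subset of properties it possesses, and let wt : X → R be a weight function with values in a commutative ring R. For a lace L, let N(L) = Σ_{x ∈ X, L ⊆ A(x), C(L) ∩ A(x) = ∅} wt(x), the total weight of elements that have all properties of L and none of the properties in C(L). Then the total weight N₀(X) = Σ_{x ∈ X, A(x) = ∅} wt(x) of elements having none of the properties of P satisfies N₀(X) = Σ_{L lace of l} (−1)^{|L|} N(L). -/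
section aux
variable {α : Type*} [DecidableEq α] [Fintype α]

lemma sum_neg_one_pow (R : Type*) [Ring R] (D : Finset α) :
    ∑ T ∈ D.powerset, (-1 : R) ^ T.card = if D = ∅ then 1 else 0 := by
  rcases D.eq_empty_or_nonempty with h | h
  · subst h; simp
  · obtain ⟨a, ha⟩ := h
    have hne : D ≠ ∅ := Finset.nonempty_iff_ne_empty.mp ⟨a, ha⟩
    rw [if_neg hne]
    have hD : D = insert a (D.erase a) := (Finset.insert_erase ha).symm
    rw [hD, Finset.sum_powerset_insert (Finset.notMem_erase a D)]
    have : ∀ T ∈ (D.erase a).powerset,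
        (-1 : R) ^ (insert a T).card = -(-1 : R) ^ T.card := by
      intro T hT
      have haT : a ∉ T := fun h => Finset.notMem_erase a D (Finset.mem_powerset.mp hT h)
      rw [Finset.card_insert_of_notMem haT, pow_succ, mul_neg_one]
    rw [Finset.sum_congr rfl this, Finset.sum_neg_distrib]
    exact add_neg_cancel _

variable (l : Finset α → Finset α)
    (h1 : ∀ S : Finset α, l S ⊆ S)
    (h2 : ∀ S G : Finset α, l S ⊆ G → G ⊆ S → l G = l S)
    (h3 : ∀ S₁ S₂ : Finset α, l S₁ = l S₂ → l (S₁ ∪ S₂) = l S₁)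

include h1 h2 h3 in
lemma lace_union_compat {L : Finset α} (hL : l L = L) :
    ∀ T : Finset α, T ⊆ laceC l L → l (L ∪ T) = L := by
  intro T
  induction T using Finset.induction_on with
  | empty => intro _; simpa using hL
  | @insert a T ha ih =>
    intro hsub
    have haC : a ∈ laceC l L := hsub (Finset.mem_insert_self a T)
    have hTC : T ⊆ laceC l L := fun x hx => hsub (Finset.mem_insert_of_mem hx)
    have h1' : l (insert a L) = L := (Finset.mem_filter.mp haC).2
    have h2' : l (L ∪ T) = L := ih hTC
    have := h3 (insert a L) (L ∪ T) (by rw [h1', h2'])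
    have heq : insert a L ∪ (L ∪ T) = L ∪ insert a T := by
      ext x; simp only [Finset.mem_insert, Finset.mem_union]; tauto
    rw [heq] at this
    rw [this, h1']

include h1 h2 h3 in
lemma lace_fiber_char {L : Finset α} (hL : l L = L) (S : Finset α) :
    l S = L ↔ L ⊆ S ∧ S \ L ⊆ laceC l L := by
  constructor
  · intro hS
    have hLS : L ⊆ S := hS ▸ h1 S
    refine ⟨hLS, fun p hp => ?_⟩
    obtain ⟨hpS, hpL⟩ := Finset.mem_sdiff.mp hp
    have hsub1 : l S ⊆ insert p L := by rw [hS]; exact Finset.subset_insert p L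
    have hsub2 : insert p L ⊆ S := Finset.insert_subset hpS hLS
    have := h2 S (insert p L) hsub1 hsub2
    simp only [laceC, Finset.mem_filter, Finset.mem_sdiff, Finset.mem_univ, true_and]
    exact ⟨hpL, this.trans hS⟩
  · rintro ⟨hLS, hC⟩
    have : l (L ∪ (S \ L)) = L := lace_union_compat l h1 h2 h3 hL (S \ L) hC
    rwa [Finset.union_sdiff_of_subset hLS] at this

include h1 h2 h3 in
lemma per_x_identity (Y : Finset α) :
    ∀ (R : Type*) [Ring R],
    ∑ S ∈ Y.powerset, (-1 : R) ^ S.card =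
      ∑ L ∈ Finset.univ.filter (fun L : Finset α => l L = L),
        (if L ⊆ Y ∧ laceC l L ∩ Y = ∅ then (-1 : R) ^ L.card else 0) := by
  intro R _
  have hmap : ∀ S ∈ Y.powerset, l S ∈ Finset.univ.filter (fun L : Finset α => l L = L) := by
    intro S _
    simp only [Finset.mem_filter, Finset.mem_univ, true_and]
    exact h2 S (l S) (le_refl _) (h1 S)
  rw [← Finset.sum_fiberwise_of_maps_to hmap (fun S => (-1 : R) ^ S.card)]
  refine Finset.sum_congr rfl ?_
  intro L hLmem
  have hL : l L = L := (Finset.mem_filter.mp hLmem).2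
  by_cases hLY : L ⊆ Y
  · have hfib : Y.powerset.filter (fun S => l S = L) =
        ((laceC l L ∩ Y).powerset).image (fun T => L ∪ T) := by
      ext S
      simp only [Finset.mem_filter, Finset.mem_powerset, Finset.mem_image]
      constructor
      · rintro ⟨hSY, hSL⟩
        obtain ⟨hLS, hC⟩ := (lace_fiber_char l h1 h2 h3 hL S).mp hSL
        refine ⟨S \ L, ?_, Finset.union_sdiff_of_subset hLS⟩
        intro p hp
        exact Finset.mem_inter.mpr ⟨hC hp, hSY (Finset.mem_sdiff.mp hp).1⟩
      · rintro ⟨T, hT, rfl⟩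
        have hTC : T ⊆ laceC l L := hT.trans (Finset.inter_subset_left)
        have hTY : T ⊆ Y := hT.trans (Finset.inter_subset_right)
        exact ⟨Finset.union_subset hLY hTY, lace_union_compat l h1 h2 h3 hL T hTC⟩
    have hdisL : ∀ T ⊆ laceC l L ∩ Y, Disjoint L T := by
      intro T hT
      refine Finset.disjoint_left.mpr fun p hpL hpT => ?_
      have := (hT hpT)
      have := Finset.mem_inter.mp this |>.1
      exact (Finset.mem_sdiff.mp (Finset.mem_filter.mp this).1).2 hpL
    have hinj : Set.InjOn (fun T => L ∪ T) ((laceC l L ∩ Y).powerset : Set (Finset α)) := by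
      intro T1 hT1 T2 hT2 h
      have d1 := hdisL T1 (Finset.mem_powerset.mp hT1)
      have d2 := hdisL T2 (Finset.mem_powerset.mp hT2)
      have h' : L ∪ T1 = L ∪ T2 := h
      have : (L ∪ T1) \ L = (L ∪ T2) \ L := by rw [h']
      rwa [Finset.union_sdiff_cancel_left d1, Finset.union_sdiff_cancel_left d2] at this
    rw [hfib, Finset.sum_image hinj]
    have hcard : ∀ T ∈ (laceC l L ∩ Y).powerset,
        (-1 : R) ^ (L ∪ T).card = (-1 : R) ^ L.card * (-1 : R) ^ T.card := by
      intro T hT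
      rw [Finset.card_union_of_disjoint (hdisL T (Finset.mem_powerset.mp hT)), pow_add]
    rw [Finset.sum_congr rfl hcard, ← Finset.mul_sum, sum_neg_one_pow R]
    by_cases hD : laceC l L ∩ Y = ∅ <;> simp [hD, hLY]
  · have hfib : Y.powerset.filter (fun S => l S = L) = ∅ := by
      rw [Finset.filter_eq_empty_iff]
      intro S hS hSL
      exact hLY (((lace_fiber_char l h1 h2 h3 hL S).mp hSL).1.trans (Finset.mem_powerset.mp hS))
    rw [hfib]
    simp [hLY]

end aux

/-- Abstract Lace Expansion:
`N₀(X) = Σ_{L lace} (−1)^{|L|} N(L)`, where `N₀(X)` is the total weight of the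
elements possessing none of the properties, and `N(L)` is the total weight of
the elements possessing all properties of `L` and none of those of `C(L)`. -/
theorem abstract_lace_expansion {α : Type*} [DecidableEq α] [Fintype α]
    (l : Finset α → Finset α)
    (h1 : ∀ S : Finset α, l S ⊆ S)
    (h2 : ∀ S G : Finset α, l S ⊆ G → G ⊆ S → l G = l S)
    (h3 : ∀ S₁ S₂ : Finset α, l S₁ = l S₂ → l (S₁ ∪ S₂) = l S₁)
    (R : Type*) [CommRing R]
    (X : Type*) [Fintype X] (A : X → Finset α) (wt : X → R) :
    ∑ x ∈ Finset.univ.filter (fun x : X => A x = ∅), wt x =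
      ∑ L ∈ Finset.univ.filter (fun L : Finset α => l L = L),
        (-1 : R) ^ L.card *
          ∑ x ∈ Finset.univ.filter
              (fun x : X => L ⊆ A x ∧ laceC l L ∩ A x = ∅), wt x := by
  have lhs : ∑ x ∈ Finset.univ.filter (fun x : X => A x = ∅), wt x =
      ∑ x : X, (∑ S ∈ (A x).powerset, (-1 : R) ^ S.card) * wt x := by
    rw [Finset.sum_filter]
    refine Finset.sum_congr rfl fun x _ => ?_
    rw [sum_neg_one_pow R (A x)]
    by_cases h : A x = ∅ <;> simp [h]
  rw [lhs]
  have rhs : ∀ x : X, (∑ S ∈ (A x).powerset, (-1 : R) ^ S.card) * wt x =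
      ∑ L ∈ Finset.univ.filter (fun L : Finset α => l L = L),
        (if L ⊆ A x ∧ laceC l L ∩ A x = ∅ then (-1 : R) ^ L.card * wt x else 0) := by
    intro x
    rw [per_x_identity l h1 h2 h3 (A x) R, Finset.sum_mul]
    refine Finset.sum_congr rfl fun L _ => ?_
    by_cases h : L ⊆ A x ∧ laceC l L ∩ A x = ∅ <;> simp [h]
  rw [Finset.sum_congr rfl fun x _ => rhs x, Finset.sum_comm]
  refine Finset.sum_congr rfl fun L _ => ?_
  rw [Finset.mul_sum, Finset.sum_filter]
end

section
/- (Upper sieve) Let l be a lace-map on the subsets of a finite set P, let X be a finite set, let A : X → (subsets of P), and let wt : X → ℝ be a nonnegative weight function. Suppose every unsaturated lace of l (i.e., every lace L with C(L) ≠ ∅) has odd cardinality. Then N₀(X) = Σ_{x ∈ X, A(x) = ∅} wt(x) satisfies N₀(X) ≤ Σ_{L saturated lace} (−1)^{|L|} N(L), where the sum is over laces L with C(L) = ∅ and N(L) = Σ_{x ∈ X, L ⊆ A(x)} wt(x) is the total weight of elements having all the properties in L. -/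
open Finset

theorem Finset.sum_powerset_neg_one_pow_card_eq_ite {α R : Type*} [DecidableEq α] [Ring R]
    (s : Finset α) : ∑ u ∈ s.powerset, (-1 : R) ^ #u = if s = ∅ then 1 else 0 := by
  have := congrArg (Int.cast : ℤ → R) (sum_powerset_neg_one_pow_card (x := s))
  push_cast at this
  exact this

theorem Finset.sum_Icc_neg_one_pow_card {α R : Type*} [DecidableEq α] [Ring R]
    {s t : Finset α} (h : s ⊆ t) :
    ∑ u ∈ Icc s t, (-1 : R) ^ #u = if s = t then (-1) ^ #s else 0 := by
  have hdisj {u : Finset α} (hu : u ∈ (t \ s).powerset) : Disjoint s u :=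
    disjoint_sdiff.mono_right (mem_powerset.mp hu)
  have hinj : Set.InjOn (s ∪ ·) ((t \ s).powerset : Set (Finset α)) := by
    intro u hu v hv huv
    rw [← union_sdiff_cancel_left (hdisj hu), ← union_sdiff_cancel_left (hdisj hv)]
    exact congrArg (· \ s) huv
  calc ∑ u ∈ Icc s t, (-1 : R) ^ #u
      = ∑ v ∈ (t \ s).powerset, (-1 : R) ^ #s * (-1) ^ #v := by
        rw [Icc_eq_image_powerset h, sum_image hinj]
        exact sum_congr rfl fun v hv => by rw [card_union_of_disjoint (hdisj hv), pow_add]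
    _ = if s = t then (-1) ^ #s else 0 := by
        rw [← mul_sum, sum_powerset_neg_one_pow_card_eq_ite]
        simp [sdiff_eq_empty_iff_subset, subset_antisymm_iff (a := s), h]

structure IsLaceMap {α : Type*} [DecidableEq α] (l : Finset α → Finset α) : Prop where
  subset : ∀ S, l S ⊆ S
  eq_of_subset_of_subset : ∀ S G, l S ⊆ G → G ⊆ S → l G = l S
  union_eq : ∀ S₁ S₂, l S₁ = l S₂ → l (S₁ ∪ S₂) = l S₁

namespace IsLaceMap

variable {α : Type*} [DecidableEq α] {l : Finset α → Finset α} {L S : Finset α}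

theorem union_eq_of_forall_insert (hl : IsLaceMap l) (hL : l L = L) {T : Finset α}
    (hT : ∀ p ∈ T, l (insert p L) = L) : l (L ∪ T) = L := by
  induction T using Finset.induction_on with
  | empty => simpa using hL
  | insert a T _ ih =>
    have hLT : l (L ∪ T) = L := ih fun p hp => hT p (mem_insert_of_mem hp)
    have haL : l (insert a L) = L := hT a (mem_insert_self a T)
    have := hl.union_eq _ _ (hLT.trans haL.symm)
    rwa [hLT, show L ∪ T ∪ insert a L = L ∪ insert a T by grind] at this

theorem filter_powerset_eq_Icc (hl : IsLaceMap l) (hL : l L = L) :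
    {G ∈ S.powerset | l G = L} = Icc L {p ∈ S | l (insert p L) = L} := by
  ext G
  simp only [mem_filter, mem_powerset, mem_Icc, subset_iff (s₁ := G)]
  constructor
  · rintro ⟨hGS, rfl⟩
    refine ⟨hl.subset G, fun p hp => ⟨hGS hp, ?_⟩⟩
    exact hl.eq_of_subset_of_subset G _ (subset_insert _ _) (insert_subset hp (hl.subset G))
  · rintro ⟨hLG, hG⟩
    refine ⟨fun p hp => (hG hp).1, ?_⟩
    rw [← union_eq_right.mpr hLG]
    exact hl.union_eq_of_forall_insert hL fun p hp => (hG hp).2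

end IsLaceMap

section Sieve

variable {α : Type*} [DecidableEq α] {l : Finset α → Finset α} {L S : Finset α}

theorem subset_filter_insert_eq (hL : l L = L) (hLS : L ⊆ S) :
    L ⊆ {p ∈ S | l (insert p L) = L} := fun p hp =>
  mem_filter.mpr ⟨hLS hp, by rw [insert_eq_of_mem hp, hL]⟩

theorem filter_insert_eq_eq_of_laceC_eq_empty [Fintype α] (hL : l L = L) (hLS : L ⊆ S)
    (hsat : laceC l L = ∅) : {p ∈ S | l (insert p L) = L} = L := by
  refine (subset_filter_insert_eq hL hLS).antisymm' fun p hp => ?_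
  by_contra hpL
  have : p ∈ laceC l L := mem_filter.mpr ⟨mem_sdiff.mpr ⟨mem_univ p, hpL⟩, (mem_filter.mp hp).2⟩
  simp [hsat] at this

theorem IsLaceMap.sum_filter_powerset_neg_one_pow_card_le [Fintype α] (hl : IsLaceMap l)
    (hL : l L = L) (hLS : L ⊆ S) (hodd : laceC l L ≠ ∅ → Odd #L) :
    ∑ G ∈ S.powerset with l G = L, (-1 : ℝ) ^ #G ≤
      if laceC l L = ∅ then (-1) ^ #L else 0 := by
  rw [hl.filter_powerset_eq_Icc hL, sum_Icc_neg_one_pow_card (subset_filter_insert_eq hL hLS)]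
  by_cases hsat : laceC l L = ∅
  · simp [hsat, filter_insert_eq_eq_of_laceC_eq_empty hL hLS hsat]
  · rw [if_neg hsat, (hodd hsat).neg_one_pow]
    split_ifs <;> norm_num

theorem IsLaceMap.ite_eq_empty_le_sum_saturated [Fintype α] (hl : IsLaceMap l)
    (hodd : ∀ L : Finset α, l L = L → laceC l L ≠ ∅ → Odd #L) (S : Finset α) :
    (if S = ∅ then 1 else 0 : ℝ) ≤
      ∑ L ∈ S.powerset with l L = L ∧ laceC l L = ∅, (-1 : ℝ) ^ #L := by
  have hmaps : ∀ G ∈ S.powerset, l G ∈ {L ∈ S.powerset | l L = L} := fun G hG =>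
    mem_filter.mpr ⟨mem_powerset.mpr ((hl.subset G).trans (mem_powerset.mp hG)),
      hl.eq_of_subset_of_subset G _ subset_rfl (hl.subset G)⟩
  calc (if S = ∅ then 1 else 0 : ℝ)
      = ∑ G ∈ S.powerset, (-1 : ℝ) ^ #G := (sum_powerset_neg_one_pow_card_eq_ite S).symm
    _ = ∑ L ∈ S.powerset with l L = L, ∑ G ∈ S.powerset with l G = L, (-1 : ℝ) ^ #G :=
        (sum_fiberwise_of_maps_to hmaps _).symm
    _ ≤ ∑ L ∈ S.powerset with l L = L, if laceC l L = ∅ then (-1 : ℝ) ^ #L else 0 := by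
        refine sum_le_sum fun L hL => ?_
        obtain ⟨hLS, hL⟩ := mem_filter.mp hL
        exact hl.sum_filter_powerset_neg_one_pow_card_le hL (mem_powerset.mp hLS) (hodd L hL)
    _ = ∑ L ∈ S.powerset with l L = L ∧ laceC l L = ∅, (-1 : ℝ) ^ #L := by
        rw [← sum_filter, filter_filter]

end Sieve

/-- Upper sieve: if every unsaturated lace has odd cardinality and
the weights are nonnegative, then
`N₀(X) ≤ Σ_{L saturated lace} (−1)^{|L|} N(L)`. -/
theorem lace_upper_sieve {α : Type*} [DecidableEq α] [Fintype α]
    (l : Finset α → Finset α)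
    (h1 : ∀ S : Finset α, l S ⊆ S)
    (h2 : ∀ S G : Finset α, l S ⊆ G → G ⊆ S → l G = l S)
    (h3 : ∀ S₁ S₂ : Finset α, l S₁ = l S₂ → l (S₁ ∪ S₂) = l S₁)
    (X : Type*) [Fintype X] (A : X → Finset α) (wt : X → ℝ)
    (hwt : ∀ x, 0 ≤ wt x)
    (hodd : ∀ L : Finset α, l L = L → laceC l L ≠ ∅ → Odd L.card) :
    ∑ x ∈ Finset.univ.filter (fun x : X => A x = ∅), wt x ≤
      ∑ L ∈ Finset.univ.filter (fun L : Finset α => l L = L ∧ laceC l L = ∅),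
        (-1 : ℝ) ^ L.card *
          ∑ x ∈ Finset.univ.filter (fun x : X => L ⊆ A x), wt x := by
  have hl : IsLaceMap l := ⟨h1, h2, h3⟩
  calc ∑ x ∈ univ with A x = ∅, wt x
      = ∑ x, wt x * if A x = ∅ then 1 else 0 := by simp [sum_filter]
    _ ≤ ∑ x, wt x * ∑ L ∈ (A x).powerset with l L = L ∧ laceC l L = ∅, (-1 : ℝ) ^ #L :=
        sum_le_sum fun x _ =>
          mul_le_mul_of_nonneg_left (hl.ite_eq_empty_le_sum_saturated hodd (A x)) (hwt x)
    _ = ∑ L ∈ univ with l L = L ∧ laceC l L = ∅, ∑ x ∈ univ with L ⊆ A x, wt x * (-1) ^ #L := by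
        simp_rw [mul_sum]
        exact sum_comm' fun x L => by simp [and_comm]
    _ = _ := by simp_rw [mul_sum, mul_comm]
end

section
/- (Brun lace-map) Let n be a positive integer, P = {1, …, n}, and let integers n ≥ N₁ ≥ N₂ ≥ ⋯ ≥ N_n ≥ 1 be given. For a nonempty subset S = {i₁ > i₂ > ⋯ > i_r} of P (elements listed in decreasing order), define l(S) = S if i_j ≤ N_j for all 1 ≤ j ≤ r, and otherwise l(S) = {i₁, …, i_s} where s is the smallest index with i_s > N_s; define l(∅) = ∅. Then l is a lace-map, i.e., for all S, G, S₁, S₂ ⊆ P: (i) l(S) ⊆ S; (ii) l(S) ⊆ G ⊆ S implies l(G) = l(S); (iii) l(S₁) = l(S₂) implies l(S₁ ∪ S₂) = l(S₁). -/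
set_option maxHeartbeats 1000000

/-- The rank of `i` in `S`: writing `S = {i₁ > i₂ > ⋯ > i_r}`, the element `i_j`
has rank `j`, i.e. the rank of `i ∈ S` is the number of elements of `S` that
are `≥ i`. -/
def brunRank (S : Finset ℕ) (i : ℕ) : ℕ := (S.filter (fun y => i ≤ y)).card

/-- The Brun lace-map with parameters `N`: for `S = {i₁ > i₂ > ⋯ > i_r}`,
`brun N S = S` if `i_j ≤ N j` for all `j`, and otherwise
`brun N S = {i₁, …, i_s}` where `s` is the smallest index with `i_s > N s`
(equivalently, `i_s` is the largest element violating its rank bound). -/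
def brun (N : ℕ → ℕ) (S : Finset ℕ) : Finset ℕ :=
  if h : (S.filter (fun i => N (brunRank S i) < i)).Nonempty then
    S.filter (fun i => (S.filter (fun i => N (brunRank S i) < i)).max' h ≤ i)
  else S

/-- If two sets have the same elements `≥ m`, and `m` is a violator of `T`
with no violator of `T` above it, then `brun N S` is the set of elements
of `S` that are `≥ m`. -/
lemma brun_eq_of_filter_eq (N : ℕ → ℕ) (T S : Finset ℕ) (m : ℕ)
    (hfil : T.filter (fun y => m ≤ y) = S.filter (fun y => m ≤ y))
    (hmem : m ∈ T)
    (hviol : N (brunRank T m) < m)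
    (hmax : ∀ i ∈ T, N (brunRank T i) < i → i ≤ m) :
    brun N S = S.filter (fun y => m ≤ y) := by
  -- elements ≥ i (for i ≥ m) agree in S and T
  have hfilter : ∀ i, m ≤ i →
      S.filter (fun y => i ≤ y) = T.filter (fun y => i ≤ y) := by
    intro i hi
    ext y
    simp only [Finset.mem_filter]
    constructor
    · rintro ⟨hyS, hiy⟩
      have : y ∈ T.filter (fun y => m ≤ y) := by
        rw [hfil]; exact Finset.mem_filter.mpr ⟨hyS, le_trans hi hiy⟩
      exact ⟨(Finset.mem_filter.mp this).1, hiy⟩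
    · rintro ⟨hyT, hiy⟩
      have : y ∈ S.filter (fun y => m ≤ y) := by
        rw [← hfil]; exact Finset.mem_filter.mpr ⟨hyT, le_trans hi hiy⟩
      exact ⟨(Finset.mem_filter.mp this).1, hiy⟩
  have hrank : ∀ i, m ≤ i → brunRank S i = brunRank T i := by
    intro i hi; unfold brunRank; rw [hfilter i hi]
  have hmS : m ∈ S := by
    have : m ∈ S.filter (fun y => m ≤ y) := by
      rw [← hfil]; exact Finset.mem_filter.mpr ⟨hmem, le_refl m⟩
    exact (Finset.mem_filter.mp this).1
  have hmV : m ∈ S.filter (fun i => N (brunRank S i) < i) := by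
    refine Finset.mem_filter.mpr ⟨hmS, ?_⟩
    rw [hrank m le_rfl]; exact hviol
  have hne : (S.filter (fun i => N (brunRank S i) < i)).Nonempty := ⟨m, hmV⟩
  have hmax' : (S.filter (fun i => N (brunRank S i) < i)).max' hne = m := by
    apply le_antisymm
    · have hxmem := (S.filter (fun i => N (brunRank S i) < i)).max'_mem hne
      obtain ⟨hxS, hxv⟩ := Finset.mem_filter.mp hxmem
      by_contra hxm
      push_neg at hxm
      have hmx : m ≤ (S.filter (fun i => N (brunRank S i) < i)).max' hne := le_of_lt hxm
      set x := (S.filter (fun i => N (brunRank S i) < i)).max' hne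
      have hxT : x ∈ T := by
        have : x ∈ T.filter (fun y => m ≤ y) := by
          rw [hfil]; exact Finset.mem_filter.mpr ⟨hxS, hmx⟩
        exact (Finset.mem_filter.mp this).1
      have : x ≤ m := hmax x hxT (by rw [← hrank x hmx]; exact hxv)
      omega
    · exact Finset.le_max' _ m hmV
  unfold brun
  rw [dif_pos hne, hmax']

/-- Specification of `brun` in the case there is a violator: `brun N S` is the
set of elements `≥ m`, where `m` is the largest violator. -/
lemma brun_spec (N : ℕ → ℕ) (S : Finset ℕ)
    (h : (S.filter (fun i => N (brunRank S i) < i)).Nonempty) :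
    ∃ m, m ∈ S ∧ N (brunRank S m) < m ∧
      (∀ i ∈ S, N (brunRank S i) < i → i ≤ m) ∧
      brun N S = S.filter (fun y => m ≤ y) := by
  refine ⟨(S.filter (fun i => N (brunRank S i) < i)).max' h, ?_, ?_, ?_, ?_⟩
  · exact (Finset.mem_filter.mp ((S.filter (fun i => N (brunRank S i) < i)).max'_mem h)).1
  · exact (Finset.mem_filter.mp ((S.filter (fun i => N (brunRank S i) < i)).max'_mem h)).2
  · intro i hi hv
    exact Finset.le_max' (S.filter (fun j => N (brunRank S j) < j)) i
      (Finset.mem_filter.mpr ⟨hi, hv⟩)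
  · have hmmem := (S.filter (fun i => N (brunRank S i) < i)).max'_mem h
    obtain ⟨hmS, hmv⟩ := Finset.mem_filter.mp hmmem
    exact brun_eq_of_filter_eq N S S _ rfl hmS hmv
      (fun i hi hv => Finset.le_max' (S.filter (fun j => N (brunRank S j) < j)) i
        (Finset.mem_filter.mpr ⟨hi, hv⟩))

lemma brun_of_no_viol (N : ℕ → ℕ) (S : Finset ℕ)
    (h : ¬ (S.filter (fun i => N (brunRank S i) < i)).Nonempty) :
    brun N S = S := by
  unfold brun; rw [dif_neg h]

/-- the Brun map, with parameters `n ≥ N₁ ≥ N₂ ≥ ⋯ ≥ N_n ≥ 1`, is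
a lace-map on the subsets of `P = {1, …, n}`. -/
theorem brun_is_lace_map (n : ℕ) (hn : 0 < n) (N : ℕ → ℕ)
    (hbounds : ∀ j, 1 ≤ j → j ≤ n → 1 ≤ N j ∧ N j ≤ n)
    (hanti : ∀ j, 1 ≤ j → j < n → N (j + 1) ≤ N j) :
    (∀ S : Finset ℕ, S ⊆ Finset.Icc 1 n → brun N S ⊆ S) ∧
    (∀ S G : Finset ℕ, S ⊆ Finset.Icc 1 n →
      brun N S ⊆ G → G ⊆ S → brun N G = brun N S) ∧
    (∀ S₁ S₂ : Finset ℕ, S₁ ⊆ Finset.Icc 1 n → S₂ ⊆ Finset.Icc 1 n →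
      brun N S₁ = brun N S₂ → brun N (S₁ ∪ S₂) = brun N S₁) := by
  refine ⟨?_, ?_, ?_⟩
  · -- (i)
    intro S _
    unfold brun
    split_ifs with h
    · exact Finset.filter_subset _ _
    · exact subset_rfl
  · -- (ii)
    intro S G _ h1 h2
    by_cases h : (S.filter (fun i => N (brunRank S i) < i)).Nonempty
    · obtain ⟨m, hmS, hmv, hmax, hbS⟩ := brun_spec N S h
      rw [hbS] at h1
      have hfil : S.filter (fun y => m ≤ y) = G.filter (fun y => m ≤ y) := by
        ext y
        simp only [Finset.mem_filter]
        constructor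
        · rintro ⟨hyS, hmy⟩
          exact ⟨h1 (Finset.mem_filter.mpr ⟨hyS, hmy⟩), hmy⟩
        · rintro ⟨hyG, hmy⟩
          exact ⟨h2 hyG, hmy⟩
      have hbG : brun N G = G.filter (fun y => m ≤ y) :=
        brun_eq_of_filter_eq N S G m hfil hmS hmv hmax
      rw [hbG, hbS, hfil]
    · rw [brun_of_no_viol N S h] at h1
      have : G = S := Finset.Subset.antisymm h2 h1
      rw [this]
  · -- (iii)
    intro S₁ S₂ _ _ heq
    by_cases h1 : (S₁.filter (fun i => N (brunRank S₁ i) < i)).Nonempty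
    · obtain ⟨m₁, hm1S, hm1v, hmax1, hb1⟩ := brun_spec N S₁ h1
      by_cases h2 : (S₂.filter (fun i => N (brunRank S₂ i) < i)).Nonempty
      · obtain ⟨m₂, hm2S, hm2v, hmax2, hb2⟩ := brun_spec N S₂ h2
        have hL : S₁.filter (fun y => m₁ ≤ y) = S₂.filter (fun y => m₂ ≤ y) := by
          rw [← hb1, ← hb2, heq]
        have hfil : S₁.filter (fun y => m₁ ≤ y) = (S₁ ∪ S₂).filter (fun y => m₁ ≤ y) := by
          have e1 : m₁ ∈ S₂.filter (fun y => m₂ ≤ y) := by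
            rw [← hL]; exact Finset.mem_filter.mpr ⟨hm1S, le_rfl⟩
          have e2 : m₂ ∈ S₁.filter (fun y => m₁ ≤ y) := by
            rw [hL]; exact Finset.mem_filter.mpr ⟨hm2S, le_rfl⟩
          have f1 := (Finset.mem_filter.mp e1).2
          have f2 := (Finset.mem_filter.mp e2).2
          have hm12 : m₁ = m₂ := le_antisymm f2 f1
          ext y
          simp only [Finset.mem_filter, Finset.mem_union]
          constructor
          · rintro ⟨hyS, hmy⟩; exact ⟨Or.inl hyS, hmy⟩
          · rintro ⟨hyU, hmy⟩
            rcases hyU with hy | hy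
            · exact ⟨hy, hmy⟩
            · have : y ∈ S₁.filter (fun y => m₁ ≤ y) := by
                rw [hL]
                exact Finset.mem_filter.mpr ⟨hy, hm12 ▸ hmy⟩
              exact Finset.mem_filter.mp this
        have hbU : brun N (S₁ ∪ S₂) = (S₁ ∪ S₂).filter (fun y => m₁ ≤ y) :=
          brun_eq_of_filter_eq N S₁ (S₁ ∪ S₂) m₁ hfil hm1S hm1v hmax1
        rw [hbU, hb1, hfil]
      · -- S₂ has no violators: S₂ = brun N S₂ = brun N S₁ ⊆ S₁
        have hb2 : brun N S₂ = S₂ := brun_of_no_viol N S₂ h2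
        have hsub : S₂ ⊆ S₁ := by
          rw [← hb2, ← heq, hb1]
          exact Finset.filter_subset _ _
        rw [Finset.union_eq_left.mpr hsub]
    · have hb1 : brun N S₁ = S₁ := brun_of_no_viol N S₁ h1
      by_cases h2 : (S₂.filter (fun i => N (brunRank S₂ i) < i)).Nonempty
      · obtain ⟨m₂, hm2S, hm2v, hmax2, hb2⟩ := brun_spec N S₂ h2
        have hsub : S₁ ⊆ S₂ := by
          rw [← hb1, heq, hb2]
          exact Finset.filter_subset _ _
        rw [Finset.union_eq_right.mpr hsub, ← heq]
      · have hb2 : brun N S₂ = S₂ := brun_of_no_viol N S₂ h2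
        have : S₁ = S₂ := by rw [← hb1, ← hb2, heq]
        rw [← this, Finset.union_self]
end

section
/- For the Brun lace-map on P = {1, …, n} with parameters n ≥ N₁ ≥ ⋯ ≥ N_n ≥ 1 (l(S) = S if, writing S = {i₁ > ⋯ > i_r}, i_j ≤ N_j for all j; otherwise l(S) = {i₁, …, i_s} with s minimal such that i_s > N_s): the saturated laces (laces L with C(L) = ∅) are exactly the sets L = {i₁ > ⋯ > i_r} with i_j ≤ N_j for all 1 ≤ j ≤ r (including the empty set). -/
/-- `C(L)` for the Brun lace-map on `P = {1, …, n}`. -/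
def brunC (n : ℕ) (N : ℕ → ℕ) (L : Finset ℕ) : Finset ℕ :=
  (Finset.Icc 1 n \ L).filter (fun p => brun N (insert p L) = L)

/-- Inserting an element smaller than `i` does not change the rank of `i`. -/
lemma brunRank_insert_of_lt (L : Finset ℕ) (p i : ℕ) (h : p < i) :
    brunRank (insert p L) i = brunRank L i := by
  unfold brunRank
  rw [Finset.filter_insert, if_neg (by omega)]

/-- the saturated laces of the Brun lace-map are exactly the sets
`L = {i₁ > ⋯ > i_r}` with `i_j ≤ N j` for all `1 ≤ j ≤ r` (including `∅`). -/
theorem brun_saturated_laces (n : ℕ) (hn : 0 < n) (N : ℕ → ℕ)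
    (hbounds : ∀ j, 1 ≤ j → j ≤ n → 1 ≤ N j ∧ N j ≤ n)
    (hanti : ∀ j, 1 ≤ j → j < n → N (j + 1) ≤ N j)
    (L : Finset ℕ) (hL : L ⊆ Finset.Icc 1 n) :
    (brun N L = L ∧ brunC n N L = ∅) ↔ ∀ i ∈ L, i ≤ N (brunRank L i) := by
  constructor
  · rintro ⟨hfix, hC⟩ i hi
    by_contra hbad
    push_neg at hbad
    have hBne : (L.filter (fun i => N (brunRank L i) < i)).Nonempty :=
      ⟨i, Finset.mem_filter.2 ⟨hi, hbad⟩⟩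
    set m := (L.filter (fun i => N (brunRank L i) < i)).max' hBne with hm
    have hfix' : L.filter (fun j => m ≤ j) = L := by
      rw [brun, dif_pos hBne] at hfix; exact hfix
    have hmmem := Finset.max'_mem _ hBne
    rw [Finset.mem_filter] at hmmem
    obtain ⟨hmL, hmbad⟩ := hmmem
    -- every element of L is ≥ m
    have hmin : ∀ j ∈ L, m ≤ j := by
      intro j hj
      have : j ∈ L.filter (fun j => m ≤ j) := by rw [hfix']; exact hj
      exact (Finset.mem_filter.1 this).2
    -- rank of m in L is card L
    have hrank : brunRank L m = L.card := by
      unfold brunRank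
      rw [Finset.filter_true_of_mem hmin]
    have hcard1 : 1 ≤ L.card := Finset.card_pos.2 ⟨m, hmL⟩
    have hcardn : L.card ≤ n := by
      have := Finset.card_le_card hL
      simpa using this
    have hN1 : 1 ≤ N L.card := (hbounds L.card hcard1 hcardn).1
    have hm2 : 2 ≤ m := by rw [hrank] at hmbad; omega
    have hmn : m ≤ n := by
      have := hL hmL
      rw [Finset.mem_Icc] at this; exact this.2
    -- the witness p = m - 1
    set p := m - 1 with hp
    have hpm : p < m := by omega
    have hpL : p ∉ L := fun h => by have := hmin p h; omega
    -- bad set of insert p L contains m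
    have hrankm : brunRank (insert p L) m = brunRank L m :=
      brunRank_insert_of_lt L p m hpm
    have hBne' : ((insert p L).filter
        (fun i => N (brunRank (insert p L) i) < i)).Nonempty :=
      ⟨m, Finset.mem_filter.2 ⟨Finset.mem_insert_of_mem hmL, by rw [hrankm]; exact hmbad⟩⟩
    -- max of the new bad set is m
    have hmax' : ((insert p L).filter
        (fun i => N (brunRank (insert p L) i) < i)).max' hBne' = m := by
      apply le_antisymm
      · apply Finset.max'_le
        intro y hy
        rw [Finset.mem_filter] at hy
        obtain ⟨hy1, hy2⟩ := hy
        rcases Finset.mem_insert.1 hy1 with rfl | hyL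
        · omega
        · -- y ∈ L so y ≥ m > p, rank unchanged, so y is bad in L
          have hmy : m ≤ y := hmin y hyL
          rw [brunRank_insert_of_lt L p y (by omega)] at hy2
          exact Finset.le_max' (L.filter (fun i => N (brunRank L i) < i)) y
            (Finset.mem_filter.2 ⟨hyL, hy2⟩)
      · exact Finset.le_max' _ m
          (Finset.mem_filter.2 ⟨Finset.mem_insert_of_mem hmL, by rw [hrankm]; exact hmbad⟩)
    have hbrun : brun N (insert p L) = L := by
      rw [brun, dif_pos hBne', hmax', Finset.filter_insert, if_neg (by omega), hfix']
    have hpmem : p ∈ brunC n N L := by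
      rw [brunC, Finset.mem_filter, Finset.mem_sdiff, Finset.mem_Icc]
      exact ⟨⟨⟨by omega, by omega⟩, hpL⟩, hbrun⟩
    rw [hC] at hpmem
    exact absurd hpmem (Finset.notMem_empty p)
  · intro h
    have hgood : L.filter (fun i => N (brunRank L i) < i) = ∅ := by
      apply Finset.filter_eq_empty_iff.2
      intro i hi
      have := h i hi
      omega
    constructor
    · rw [brun, dif_neg (by rw [hgood]; simp)]
    · apply Finset.eq_empty_iff_forall_notMem.2
      intro p hp
      rw [brunC, Finset.mem_filter, Finset.mem_sdiff] at hp
      obtain ⟨⟨hpIcc, hpL⟩, hbrun⟩ := hp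
      rw [brun] at hbrun
      split_ifs at hbrun with hne
      · -- brun = filter; the max m' of the bad set lands in L, contradiction
        set m' := ((insert p L).filter
          (fun i => N (brunRank (insert p L) i) < i)).max' hne with hm'
        have hm'mem := Finset.max'_mem _ hne
        rw [Finset.mem_filter] at hm'mem
        obtain ⟨hm'1, hm'bad⟩ := hm'mem
        have hm'L : m' ∈ L := by
          have : m' ∈ (insert p L).filter (fun i => m' ≤ i) :=
            Finset.mem_filter.2 ⟨hm'1, le_refl m'⟩
          rw [hbrun] at this; exact this
        have hpm' : p < m' := by
          by_contra hle
          push_neg at hle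
          have : p ∈ (insert p L).filter (fun i => m' ≤ i) :=
            Finset.mem_filter.2 ⟨Finset.mem_insert_self p L, hle⟩
          rw [hbrun] at this
          exact hpL this
        rw [brunRank_insert_of_lt L p m' hpm'] at hm'bad
        have := h m' hm'L
        omega
      · -- brun = insert p L = L forces p ∈ L
        have : p ∈ L := by rw [← hbrun]; exact Finset.mem_insert_self p L
        exact hpL this
end

section
/- For the Brun lace-map on P = {1, …, n} with parameters n ≥ N₁ ≥ ⋯ ≥ N_n ≥ 1 (l(S) = S if, writing S = {i₁ > ⋯ > i_r}, i_j ≤ N_j for all j; otherwise l(S) = {i₁, …, i_s} with s minimal such that i_s > N_s): the unsaturated laces are exactly the sets L = {i₁ > ⋯ > i_r} with i_j ≤ N_j for all 1 ≤ j ≤ r−1 and i_r > N_r, and for such a lace L one has C(L) = {i_r − 1, i_r − 2, …, 1}. -/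
lemma brunRank_min' (L : Finset ℕ) (h : L.Nonempty) :
    brunRank L (L.min' h) = L.card := by
  unfold brunRank
  rw [Finset.filter_true_of_mem (fun i hi => L.min'_le i hi)]

lemma brunRank_insert_lt (L : Finset ℕ) (p i : ℕ) (hpi : p < i) :
    brunRank (insert p L) i = brunRank L i := by
  unfold brunRank
  rw [Finset.filter_insert, if_neg (by omega)]

/-- If every non-minimal element of `L` is good, then `brun N L = L`. -/
lemma brun_eq_self (N : ℕ → ℕ) (L : Finset ℕ) (h : L.Nonempty)
    (hgood : ∀ i ∈ L, i ≠ L.min' h → i ≤ N (brunRank L i)) :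
    brun N L = L := by
  unfold brun
  split_ifs with hb
  · have hall : ∀ x ∈ L.filter (fun i => N (brunRank L i) < i), x = L.min' h := by
      intro x hx
      rw [Finset.mem_filter] at hx
      by_contra hne
      exact absurd (hgood x hx.1 hne) (by omega)
    have hmax : (L.filter (fun i => N (brunRank L i) < i)).max' hb = L.min' h :=
      hall _ (Finset.max'_mem _ hb)
    rw [hmax]
    exact Finset.filter_true_of_mem (fun i hi => L.min'_le i hi)
  · rfl

/-- For an unsaturated lace `L` and `p < min L`, inserting `p` laces back to `L`. -/
lemma brun_insert_eq (N : ℕ → ℕ) (L : Finset ℕ) (h : L.Nonempty)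
    (hgood : ∀ i ∈ L, i ≠ L.min' h → i ≤ N (brunRank L i))
    (hbad : N L.card < L.min' h) (p : ℕ) (hp : p < L.min' h) :
    brun N (insert p L) = L := by
  set m := L.min' h with hm
  have hmem : ∀ i ∈ L, m ≤ i := fun i hi => L.min'_le i hi
  have hrank : ∀ i ∈ L, brunRank (insert p L) i = brunRank L i := by
    intro i hi
    exact brunRank_insert_lt L p i (lt_of_lt_of_le hp (hmem i hi))
  have hmmem : m ∈ L := L.min'_mem h
  -- m is a bad element of insert p L
  have hmbad : m ∈ (insert p L).filter (fun i => N (brunRank (insert p L) i) < i) := by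
    rw [Finset.mem_filter]
    refine ⟨Finset.mem_insert_of_mem hmmem, ?_⟩
    rw [hrank m hmmem, brunRank_min']
    exact hbad
  have hb : ((insert p L).filter
      (fun i => N (brunRank (insert p L) i) < i)).Nonempty := ⟨m, hmbad⟩
  unfold brun
  rw [dif_pos hb]
  have hmax : ((insert p L).filter
      (fun i => N (brunRank (insert p L) i) < i)).max' hb = m := by
    apply le_antisymm
    · apply Finset.max'_le
      intro x hx
      rw [Finset.mem_filter, Finset.mem_insert] at hx
      rcases hx.1 with rfl | hxL
      · omega
      · by_contra hlt
        have hxne : x ≠ m := by omega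
        have := hgood x hxL hxne
        rw [hrank x hxL] at hx
        omega
    · exact Finset.le_max' _ m hmbad
  rw [hmax, Finset.filter_insert, if_neg (by omega)]
  exact Finset.filter_true_of_mem hmem

/-- If inserting `p ∉ L` laces back to `L`, then `L` is nonempty, `p < min L`,
and `N |L| < min L`. -/
lemma of_brun_insert_eq (N : ℕ → ℕ) (L : Finset ℕ) (p : ℕ) (hp : p ∉ L)
    (heq : brun N (insert p L) = L) :
    ∃ h : L.Nonempty, p < L.min' h ∧ N L.card < L.min' h := by
  classical
  unfold brun at heq
  split_ifs at heq with hb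
  · set m := ((insert p L).filter
      (fun i => N (brunRank (insert p L) i) < i)).max' hb with hmdef
    have hmbad := Finset.max'_mem _ hb
    rw [← hmdef] at hmbad
    rw [Finset.mem_filter] at hmbad
    have hmL : m ∈ L := by
      rw [← heq, Finset.mem_filter]
      exact ⟨hmbad.1, le_refl m⟩
    have hLne : L.Nonempty := ⟨m, hmL⟩
    have hle : ∀ i ∈ L, m ≤ i := by
      intro i hi
      rw [← heq, Finset.mem_filter] at hi
      exact hi.2
    have hpm : p < m := by
      by_contra hle2
      push_neg at hle2
      have : p ∈ L := by
        rw [← heq, Finset.mem_filter]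
        exact ⟨Finset.mem_insert_self p L, hle2⟩
      exact hp this
    have hmin : m = L.min' hLne :=
      le_antisymm (hle _ (L.min'_mem hLne)) (L.min'_le m hmL)
    refine ⟨hLne, by omega, ?_⟩
    have hrk : brunRank (insert p L) m = L.card := by
      rw [brunRank_insert_lt L p m hpm, hmin, brunRank_min']
    rw [hrk] at hmbad
    omega
  · exfalso
    have : p ∈ L := heq ▸ Finset.mem_insert_self p L
    exact hp this

/-- In a lace, every non-minimal element is good. -/
lemma good_of_lace (N : ℕ → ℕ) (L : Finset ℕ) (h : L.Nonempty)
    (hlace : brun N L = L) :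
    ∀ i ∈ L, i ≠ L.min' h → i ≤ N (brunRank L i) := by
  intro i hi hne
  by_contra hlt
  push_neg at hlt
  have hibad : i ∈ L.filter (fun i => N (brunRank L i) < i) :=
    Finset.mem_filter.mpr ⟨hi, hlt⟩
  have hb : (L.filter (fun i => N (brunRank L i) < i)).Nonempty := ⟨i, hibad⟩
  unfold brun at hlace
  rw [dif_pos hb] at hlace
  set m := (L.filter (fun i => N (brunRank L i) < i)).max' hb with hmdef
  have hle : ∀ j ∈ L, m ≤ j := by
    intro j hj
    rw [← hlace, Finset.mem_filter] at hj
    exact hj.2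
  have h1 : m ≤ L.min' h := hle _ (L.min'_mem h)
  have h2 : i ≤ m := Finset.le_max' _ i hibad
  have h3 : L.min' h ≤ i := L.min'_le i hi
  omega

/-- the unsaturated laces of the Brun lace-map are exactly the
sets `L = {i₁ > ⋯ > i_r}` with `i_j ≤ N j` for `1 ≤ j ≤ r − 1` but `i_r > N r`
(note the minimum `i_r` has rank `r = |L|`), and such a lace has
`C(L) = {i_r − 1, i_r − 2, …, 1}`. -/
theorem brun_unsaturated_laces (n : ℕ) (hn : 0 < n) (N : ℕ → ℕ)
    (hbounds : ∀ j, 1 ≤ j → j ≤ n → 1 ≤ N j ∧ N j ≤ n)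
    (hanti : ∀ j, 1 ≤ j → j < n → N (j + 1) ≤ N j)
    (L : Finset ℕ) (hL : L ⊆ Finset.Icc 1 n) :
    ((brun N L = L ∧ brunC n N L ≠ ∅) ↔
      ∃ h : L.Nonempty,
        (∀ i ∈ L, i ≠ L.min' h → i ≤ N (brunRank L i)) ∧ N L.card < L.min' h) ∧
    (∀ h : L.Nonempty,
      (∀ i ∈ L, i ≠ L.min' h → i ≤ N (brunRank L i)) → N L.card < L.min' h →
        brunC n N L = Finset.Ico 1 (L.min' h)) := by
  classical
  have hCeq : ∀ h : L.Nonempty,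
      (∀ i ∈ L, i ≠ L.min' h → i ≤ N (brunRank L i)) → N L.card < L.min' h →
        brunC n N L = Finset.Ico 1 (L.min' h) := by
    intro h hgood hbad
    ext p
    simp only [brunC, Finset.mem_filter, Finset.mem_sdiff, Finset.mem_Icc,
      Finset.mem_Ico]
    constructor
    · rintro ⟨⟨⟨hp1, _⟩, hpL⟩, heq⟩
      obtain ⟨h', hplt, _⟩ := of_brun_insert_eq N L p hpL heq
      exact ⟨hp1, hplt⟩
    · rintro ⟨hp1, hplt⟩
      have hminL : L.min' h ∈ L := L.min'_mem h
      have hminn : L.min' h ≤ n := (Finset.mem_Icc.mp (hL hminL)).2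
      have hpL : p ∉ L := fun hc => absurd (L.min'_le p hc) (by omega)
      exact ⟨⟨⟨hp1, by omega⟩, hpL⟩, brun_insert_eq N L h hgood hbad p hplt⟩
  refine ⟨⟨?_, ?_⟩, hCeq⟩
  · rintro ⟨hlace, hCne⟩
    obtain ⟨p, hp⟩ := Finset.nonempty_iff_ne_empty.mpr hCne
    simp only [brunC, Finset.mem_filter, Finset.mem_sdiff] at hp
    obtain ⟨⟨_, hpL⟩, heq⟩ := hp
    obtain ⟨h, _, hbad⟩ := of_brun_insert_eq N L p hpL heq
    exact ⟨h, good_of_lace N L h hlace, hbad⟩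
  · rintro ⟨h, hgood, hbad⟩
    refine ⟨brun_eq_self N L h hgood, ?_⟩
    rw [hCeq h hgood hbad]
    have hcard1 : 1 ≤ L.card := Finset.card_pos.mpr h
    have hcardn : L.card ≤ n := by
      have := Finset.card_le_card hL
      simpa [Nat.card_Icc] using this
    have hN1 := (hbounds L.card hcard1 hcardn).1
    have : (1 : ℕ) ∈ Finset.Ico 1 (L.min' h) := by
      rw [Finset.mem_Ico]
      omega
    exact Finset.ne_empty_of_mem this
end

section
/- (Parity for the upper Brun sieve) For the Brun lace-map on P = {1, …, n} with parameters n ≥ N₁ ≥ ⋯ ≥ N_n ≥ 1, suppose additionally that N₁ = N₂, N₃ = N₄, …, i.e., N_{2j−1} = N_{2j} whenever 2j ≤ n. Then every unsaturated lace has odd cardinality. -/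
/-- Parity for the upper Brun sieve: if moreover
`N₁ = N₂, N₃ = N₄, …` (i.e. `N_{2j−1} = N_{2j}` whenever `2j ≤ n`), then every
unsaturated lace of the Brun lace-map has odd cardinality. -/
theorem brun_upper_parity (n : ℕ) (hn : 0 < n) (N : ℕ → ℕ)
    (hbounds : ∀ j, 1 ≤ j → j ≤ n → 1 ≤ N j ∧ N j ≤ n)
    (hanti : ∀ j, 1 ≤ j → j < n → N (j + 1) ≤ N j)
    (hpair : ∀ j, 1 ≤ j → 2 * j ≤ n → N (2 * j - 1) = N (2 * j))
    (L : Finset ℕ) (hL : L ⊆ Finset.Icc 1 n)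
    (hlace : brun N L = L) (hunsat : brunC n N L ≠ ∅) :
    Odd L.card := by
  obtain ⟨p, hp⟩ := Finset.nonempty_iff_ne_empty.mpr hunsat
  rw [brunC, Finset.mem_filter, Finset.mem_sdiff] at hp
  obtain ⟨⟨hp1, hpL⟩, hbr⟩ := hp
  set S := insert p L with hS
  have hSne : S ≠ L := fun h => hpL (h ▸ Finset.mem_insert_self p L)
  rw [brun] at hbr
  split at hbr
  case isFalse h => exact absurd hbr hSne
  case isTrue h =>
  set M := (S.filter fun i => N (brunRank S i) < i).max' h with hMdef
  -- hbr : S.filter (fun i => M ≤ i) = L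
  have hMmem : M ∈ S.filter fun i => N (brunRank S i) < i := Finset.max'_mem _ h
  have hMS : M ∈ S := (Finset.mem_filter.mp hMmem).1
  have hMviol : N (brunRank S M) < M := (Finset.mem_filter.mp hMmem).2
  have hML : M ∈ L := by
    rw [← hbr, Finset.mem_filter]; exact ⟨hMS, le_refl M⟩
  have h_all_ge : ∀ i ∈ L, M ≤ i := by
    intro i hi
    rw [← hbr, Finset.mem_filter] at hi; exact hi.2
  have hrank : brunRank S M = L.card := by
    rw [brunRank, hbr]
  have hNr : N L.card < M := hrank ▸ hMviol
  -- now analyze hlace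
  have hLfilt : L.filter (fun y => M ≤ y) = L := Finset.filter_true_of_mem h_all_ge
  have hrankL : brunRank L M = L.card := by rw [brunRank, hLfilt]
  have hMviolL : M ∈ L.filter fun i => N (brunRank L i) < i := by
    rw [Finset.mem_filter]; exact ⟨hML, hrankL ▸ hNr⟩
  rw [brun] at hlace
  split at hlace
  case isFalse h' => exact absurd ⟨M, hMviolL⟩ h'
  case isTrue h' =>
  set M' := (L.filter fun i => N (brunRank L i) < i).max' h' with hM'def
  have hM'le : M' ≤ M := by
    have := h_all_ge -- all of L ≥ M
    have hMin : ∀ i ∈ L, M' ≤ i := by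
      intro i hi; rw [← hlace, Finset.mem_filter] at hi; exact hi.2
    exact hMin M hML
  have hMM' : M = M' := le_antisymm (Finset.le_max' _ M hMviolL) hM'le
  have hnoviol : ∀ i ∈ L, i ≠ M → ¬ (N (brunRank L i) < i) := by
    intro i hi hne hv
    have hmem : i ∈ L.filter fun j => N (brunRank L j) < j := Finset.mem_filter.mpr ⟨hi, hv⟩
    have : i ≤ M' := Finset.le_max' _ i hmem
    exact hne (le_antisymm (hMM' ▸ this) (h_all_ge i hi))
  -- parity argument
  rw [← Nat.not_even_iff_odd]
  intro heven
  obtain ⟨m, hm⟩ := heven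
  have hr0 : 0 < L.card := Finset.card_pos.mpr ⟨M, hML⟩
  have hm1 : 1 ≤ m := by omega
  have hrn : L.card ≤ n := by
    calc L.card ≤ (Finset.Icc 1 n).card := Finset.card_le_card hL
    _ = n := by rw [Nat.card_Icc]; omega
  -- second smallest element q
  have herne : (L.erase M).Nonempty := by
    rw [← Finset.card_pos, Finset.card_erase_of_mem hML]; omega
  set q := (L.erase M).min' herne with hqdef
  have hqmem : q ∈ L.erase M := Finset.min'_mem _ herne
  have hqL : q ∈ L := Finset.mem_of_mem_erase hqmem
  have hqne : q ≠ M := Finset.ne_of_mem_erase hqmem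
  have hMq : M < q := lt_of_le_of_ne (h_all_ge q hqL) (Ne.symm hqne)
  have hfq : L.filter (fun y => q ≤ y) = L.erase M := by
    ext i
    simp only [Finset.mem_filter, Finset.mem_erase]
    constructor
    · rintro ⟨hi, hqi⟩; exact ⟨by omega, hi⟩
    · rintro ⟨hne, hi⟩
      exact ⟨hi, Finset.min'_le _ i (Finset.mem_erase.mpr ⟨hne, hi⟩)⟩
  have hrq : brunRank L q = L.card - 1 := by
    rw [brunRank, hfq, Finset.card_erase_of_mem hML]
  have hq_ok : ¬ (N (brunRank L q) < q) := hnoviol q hqL hqne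
  rw [hrq] at hq_ok
  have hNpair : N (L.card - 1) = N L.card := by
    have := hpair m hm1 (by omega)
    have h1 : 2 * m - 1 = L.card - 1 := by omega
    have h2 : 2 * m = L.card := by omega
    rw [h1, h2] at this; exact this
  omega
end
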